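/- Let 0 ≤ λ_i ≤ 1 with λ_1+λ_2 < 1, λ_2+λ_3 < 1 and λ_3+λ_4 < 1, and let the 4-queue path-graph system evolve under the Top-Down priority policy π_TD^(4) defined by: if Q_1(t) > 0 then S(t) = (1,0,1,0) when Q_3(t) > 0 and S(t) = (1,0,0,1) otherwise; else if Q_2(t) > 0 then S(t) = (0,1,0,1); else S(t) = (1,0,1,0) when Q_3(t) > 0 and S(t) = (1,0,0,1) otherwise. Then limsup_{T→∞} (1/T) ∑_{t=0}^{T−1} ∑_{i=1}^{4} E[Q_i(t)] < ∞, i.e., π_TD^(4) is throughput-optimal. -/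

import Mathlib

/-!
Queues are indexed `0, …, 3` here (the paper's `1, …, 4`). Under π_TD⁽⁴⁾ each edge `{i, i+1}` of
the path serves at most one packet per slot, and it serves one unless it is *blocked*; a blocked
edge's load is dominated by a power of the load of the edge before it. Edge `{0,1}` is never
blocked while nonempty; `{1,2}` is blocked only when queue 2 is empty, so its load is then at most
that of `{0,1}`; `{2,3}` is blocked only when queue 3 is empty and queue 2 is empty or queue 1 is
not, so its load is then at most `(Q₁ + Q₂)²`.

Arrivals of slot `t` are independent of the state at time `t`, so for an edge with load `L`,
arrival rate `λ < 1` and leak `e` (a bound on `L`, resp. `L²`, in blocked states) the quadratic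
Lyapunov function drifts by `E L'² - E L² ≤ -2(1-λ) E L + 2 E e + 4`, and the cubic one by
`E L'³ - E L³ ≤ -3(1-λ) E L² + 3 E e + 12 E L + 8`. Telescoping turns these into bounds on the
time averages of `E L` and `E L²` in terms of those of `E e`. Going down the path — first and
second moments of `{0,1}`, then of `{1,2}`, then the first moment of `{2,3}` — bounds the time
average of `E (L₀₁ + L₂₃) = E ∑ Qᵢ`.
-/

open MeasureTheory ProbabilityTheory Filter
open scoped ENNReal

/-- The Top-Down priority policy π_TD⁽⁴⁾ for the 4-queue path graph. -/
def piTD4 (q : Fin 4 → ℕ) : Fin 4 → ℕ :=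
  if 0 < q 0 then (if 0 < q 2 then ![1, 0, 1, 0] else ![1, 0, 0, 1])
  else if 0 < q 1 then ![0, 1, 0, 1]
  else (if 0 < q 2 then ![1, 0, 1, 0] else ![1, 0, 0, 1])

open Finset

def HasBoundedAverages (f : ℕ → ℝ) : Prop :=
  ∃ C, ∀ T : ℕ, ∑ t ∈ range T, f t ≤ C * T

namespace HasBoundedAverages

variable {f g : ℕ → ℝ}

lemma const (c : ℝ) : HasBoundedAverages fun _ => c :=
  ⟨c, fun T => by simp [mul_comm]⟩

lemma add (hf : HasBoundedAverages f) (hg : HasBoundedAverages g) :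
    HasBoundedAverages (f + g) := by
  obtain ⟨C, hC⟩ := hf
  obtain ⟨D, hD⟩ := hg
  exact ⟨C + D, fun T => by
    simpa [Finset.sum_add_distrib, add_mul] using add_le_add (hC T) (hD T)⟩

lemma const_mul (hf : HasBoundedAverages f) {c : ℝ} (hc : 0 ≤ c) :
    HasBoundedAverages fun t => c * f t := by
  obtain ⟨C, hC⟩ := hf
  exact ⟨c * C, fun T => by
    simpa [← Finset.mul_sum, mul_assoc] using mul_le_mul_of_nonneg_left (hC T) hc⟩

lemma of_drift {V b : ℕ → ℝ} {ε : ℝ} (hε : 0 < ε) (hV0 : V 0 = 0) (hV : ∀ t, 0 ≤ V t)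
    (hdrift : ∀ t, V (t + 1) ≤ V t - ε * f t + b t) (hb : HasBoundedAverages b) :
    HasBoundedAverages f := by
  obtain ⟨C, hC⟩ := hb
  have htel (T : ℕ) : V T + ε * ∑ t ∈ range T, f t ≤ ∑ t ∈ range T, b t := by
    induction T with
    | zero => simp [hV0]
    | succ T ih =>
      rw [Finset.sum_range_succ, Finset.sum_range_succ]
      linarith [hdrift T]
  refine ⟨C / ε, fun T => ?_⟩
  rw [div_mul_eq_mul_div, le_div_iff₀ hε, mul_comm]
  linarith [htel T, hV T, hC T]

lemma limsup_lt_top (hf : HasBoundedAverages f) (hf0 : ∀ t, 0 ≤ f t) :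
    limsup (fun T : ℕ => (∑ t ∈ range T, ENNReal.ofReal (f t)) / (T : ℝ≥0∞)) atTop < ⊤ := by
  obtain ⟨C, hC⟩ := hf
  refine lt_of_le_of_lt (limsup_le_of_le (by isBoundedDefault)
    (Eventually.of_forall fun T => ENNReal.div_le_of_le_mul ?_))
    (ENNReal.ofReal_lt_top (r := C))
  rw [← ENNReal.ofReal_sum_of_nonneg fun t _ => hf0 t, ← ENNReal.ofReal_natCast,
    ← ENNReal.ofReal_mul' (Nat.cast_nonneg T)]
  exact ENNReal.ofReal_le_ofReal (hC T)

end HasBoundedAverages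

namespace Queueing

variable {ι Ω : Type*}

def load (G : Finset ι) (q : ι → ℕ) : ℕ := ∑ i ∈ G, q i

/-- A scheduled queue sends a packet only if it is nonempty. -/
def served (π : (ι → ℕ) → ι → ℕ) (G : Finset ι) (q : ι → ℕ) : ℕ :=
  ∑ i ∈ G, min (π q i) (q i)

structure IsBernoulliArrivals [MeasurableSpace Ω] (μ : Measure Ω) (lam : ι → ℝ)
    (A : ι → ℕ → Ω → ℕ) : Prop where
  rate_nonneg : ∀ i, 0 ≤ lam i
  measurable : ∀ i t, Measurable (A i t)
  le_one : ∀ i t ω, A i t ω ≤ 1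
  measure_setOf_eq_one : ∀ i t, μ {ω | A i t ω = 1} = ENNReal.ofReal (lam i)
  indep : iIndepFun (fun p : ι × ℕ => A p.1 p.2) μ

structure IsQueueProcess (π : (ι → ℕ) → ι → ℕ) (A : ι → ℕ → Ω → ℕ) (Q : ℕ → ι → Ω → ℕ) :
    Prop where
  zero : ∀ i ω, Q 0 i ω = 0
  succ : ∀ t i ω, Q (t + 1) i ω = Q t i ω - π (Q t · ω) i + A i t ω

abbrev arrivalSigma (A : ι → ℕ → Ω → ℕ) (S : Set (ι × ℕ)) : MeasurableSpace Ω :=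
  ⨆ p ∈ S, MeasurableSpace.comap (A p.1 p.2) inferInstance

section Arrivals

variable {A : ι → ℕ → Ω → ℕ}

lemma measurable_arrivalSigma {S : Set (ι × ℕ)} {i : ι} {t : ℕ} (h : (i, t) ∈ S) :
    Measurable[arrivalSigma A S] (A i t) :=
  Measurable.of_comap_le (le_iSup₂ (f := fun p (_ : p ∈ S) =>
    MeasurableSpace.comap (A p.1 p.2) inferInstance) (i, t) h)

lemma arrivalSigma_mono {S T : Set (ι × ℕ)} (h : S ⊆ T) : arrivalSigma A S ≤ arrivalSigma A T :=
  biSup_mono h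

variable [MeasurableSpace Ω]

lemma arrivalSigma_le (hA : ∀ i t, Measurable (A i t)) (S : Set (ι × ℕ)) :
    arrivalSigma A S ≤ ‹MeasurableSpace Ω› :=
  iSup₂_le fun p _ => (hA p.1 p.2).comap_le

lemma indepFun_arrival_of_measurable {μ : Measure Ω} (hA : ∀ i t, Measurable (A i t))
    (hindep : iIndepFun (fun p : ι × ℕ => A p.1 p.2) μ) {S : Set (ι × ℕ)} {β : Type*}
    [MeasurableSpace β] {f : Ω → β} (hf : Measurable[arrivalSigma A S] f) {i : ι} {t : ℕ}
    (h : (i, t) ∉ S) : IndepFun f (A i t) μ := by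
  have hST : Disjoint S {(i, t)} := Set.disjoint_singleton_right.mpr h
  have hSt := indep_iSup_of_disjoint (fun p => (hA p.1 p.2).comap_le)
    ((iIndepFun_iff_iIndep _ _ _).mp hindep) hST
  rw [_root_.iSup_singleton] at hSt
  exact (IndepFun_iff_Indep _ _ _).mpr (indep_of_indep_of_le_left hSt hf.comap_le)

end Arrivals

lemma le_add_mul_of_imp {x d e : ℕ} (h : d = 0 → x ≤ e) : x ≤ e + x * d := by
  rcases Nat.eq_zero_or_pos d with hd | hd
  · simpa [hd] using h hd
  · exact le_add_left (Nat.le_mul_of_pos_right x hd)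

lemma sq_sub_add_le {x d a e : ℝ} (hd0 : 0 ≤ d) (hd1 : d ≤ 1) (ha0 : 0 ≤ a)
    (ha2 : a ≤ 2) (he : x ≤ e + x * d) :
    (x - d + a) ^ 2 ≤ x ^ 2 + 2 * (x * a) - 2 * x + 2 * e + 4 := by
  nlinarith

lemma cube_sub_add_le {x d a e : ℝ} (hx : 0 ≤ x) (hd0 : 0 ≤ d) (hd1 : d ≤ 1) (ha0 : 0 ≤ a)
    (ha2 : a ≤ 2) (he : x ^ 2 ≤ e + x ^ 2 * d) :
    (x - d + a) ^ 3 ≤ x ^ 3 + 3 * (x ^ 2 * a) - 3 * x ^ 2 + 3 * e + 12 * x + 8 := by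
  have h2 : (a - d) ^ 2 ≤ 4 := by nlinarith
  have h3 : (a - d) ^ 3 ≤ 8 := by nlinarith
  have hexp : (x - d + a) ^ 3 =
      x ^ 3 + 3 * x ^ 2 * (a - d) + 3 * x * (a - d) ^ 2 + (a - d) ^ 3 := by
    ring
  nlinarith [mul_le_mul_of_nonneg_left h2 hx, mul_nonneg (sq_nonneg x) hd0]

namespace IsBernoulliArrivals

variable [MeasurableSpace Ω] {μ : Measure Ω} {lam : ι → ℝ} {A : ι → ℕ → Ω → ℕ}

lemma integral_eq (hA : IsBernoulliArrivals μ lam A) (i : ι) (t : ℕ) :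
    ∫ ω, (A i t ω : ℝ) ∂μ = lam i := by
  have hset : MeasurableSet {ω | A i t ω = 1} := hA.measurable i t (measurableSet_singleton 1)
  calc ∫ ω, (A i t ω : ℝ) ∂μ = ∫ ω, {ω | A i t ω = 1}.indicator 1 ω ∂μ := by
        refine integral_congr_ae (ae_of_all _ fun ω => ?_)
        rcases Nat.le_one_iff_eq_zero_or_eq_one.mp (hA.le_one i t ω) with h | h <;> simp [h]
    _ = lam i := by
        rw [integral_indicator_one hset, measureReal_def, hA.measure_setOf_eq_one,
          ENNReal.toReal_ofReal (hA.rate_nonneg i)]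

lemma integrable (hA : IsBernoulliArrivals μ lam A) [IsFiniteMeasure μ] (i : ι) (t : ℕ) :
    Integrable (fun ω => (A i t ω : ℝ)) μ :=
  .of_bound ((measurable_of_countable _).comp (hA.measurable i t)).aestronglyMeasurable 1
    (ae_of_all _ fun ω => by simpa using hA.le_one i t ω)

lemma sum_le_card (hA : IsBernoulliArrivals μ lam A) (G : Finset ι) (t : ℕ) (ω : Ω) :
    ∑ i ∈ G, (A i t ω : ℝ) ≤ #G := by
  simpa using Finset.sum_le_card_nsmul G (fun i => (A i t ω : ℝ)) 1
    fun i _ => Nat.cast_le_one.mpr (hA.le_one i t ω)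

end IsBernoulliArrivals

namespace IsQueueProcess

variable {π : (ι → ℕ) → ι → ℕ} {A : ι → ℕ → Ω → ℕ} {Q : ℕ → ι → Ω → ℕ}

lemma le_time (hQ : IsQueueProcess π A Q) (hA : ∀ i t ω, A i t ω ≤ 1) (t : ℕ) (i : ι) (ω : Ω) :
    Q t i ω ≤ t := by
  induction t generalizing i with
  | zero => simp [hQ.zero]
  | succ t ih =>
    rw [hQ.succ]
    have := ih i
    have := hA i t ω
    omega

lemma load_succ (hQ : IsQueueProcess π A Q) (G : Finset ι) (t : ℕ) (ω : Ω) :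
    (load G (Q (t + 1) · ω) : ℝ) =
      load G (Q t · ω) - served π G (Q t · ω) + ∑ i ∈ G, (A i t ω : ℝ) := by
  have h (i : ι) : Q (t + 1) i ω = Q t i ω - min (π (Q t · ω) i) (Q t i ω) + A i t ω := by
    rw [hQ.succ]; omega
  simp only [load, served, h, Nat.cast_sum, Nat.cast_add,
    Nat.cast_sub (min_le_right _ _), Finset.sum_add_distrib, Finset.sum_sub_distrib]

variable [Finite ι]

lemma measurable_succ {m : MeasurableSpace Ω} (hQ : IsQueueProcess π A Q) {t : ℕ} {i : ι}
    (hQt : ∀ j, Measurable[m] (Q t j)) (hAt : Measurable[m] (A i t)) :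
    Measurable[m] (Q (t + 1) i) := by
  rw [show Q (t + 1) i = fun ω => Q t i ω - π (Q t · ω) i + A i t ω from funext (hQ.succ t i)]
  exact (measurable_of_countable fun p : (ι → ℕ) × ℕ => p.1 i - π p.1 i + p.2).comp
    ((measurable_pi_lambda _ hQt).prodMk hAt)

lemma measurable_arrivalSigma (hQ : IsQueueProcess π A Q) (t : ℕ) (i : ι) :
    Measurable[arrivalSigma A {p | p.2 < t}] (Q t i) := by
  induction t generalizing i with
  | zero =>
    rw [show Q 0 i = fun _ => 0 from funext (hQ.zero i)]
    exact measurable_const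
  | succ t ih =>
    refine hQ.measurable_succ (fun j => (ih j).mono ?_ le_rfl)
      (Queueing.measurable_arrivalSigma (Nat.lt_succ_self t))
    exact arrivalSigma_mono fun p (hp : p.2 < t) => Nat.lt_succ_of_lt hp

lemma measurable_state_arrivalSigma (hQ : IsQueueProcess π A Q) (t : ℕ) :
    Measurable[arrivalSigma A {p | p.2 < t}] fun ω => (Q t · ω) :=
  @measurable_pi_lambda _ _ _ (arrivalSigma A _) _ _ (hQ.measurable_arrivalSigma t)

lemma exists_norm_le (hQ : IsQueueProcess π A Q) (hA : ∀ i t ω, A i t ω ≤ 1)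
    (F : (ι → ℕ) → ℝ) (t : ℕ) : ∃ C, ∀ ω, ‖F (Q t · ω)‖ ≤ C := by
  obtain ⟨C, hC⟩ := ((Set.Finite.pi fun _ : ι => Set.finite_Iic t).image (‖F ·‖)).bddAbove
  exact ⟨C, fun ω => hC ⟨_, fun i _ => hQ.le_time hA t i ω, rfl⟩⟩

variable [MeasurableSpace Ω]

lemma measurable_state (hQ : IsQueueProcess π A Q) (hA : ∀ i t, Measurable (A i t)) (t : ℕ) :
    Measurable fun ω => (Q t · ω) :=
  (hQ.measurable_state_arrivalSigma t).mono (arrivalSigma_le hA _) le_rfl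

variable {μ : Measure Ω} {lam : ι → ℝ}

lemma indepFun_arrival (hA : IsBernoulliArrivals μ lam A) (hQ : IsQueueProcess π A Q)
    (F : (ι → ℕ) → ℝ) (t : ℕ) (i : ι) :
    IndepFun (fun ω => F (Q t · ω)) (fun ω => (A i t ω : ℝ)) μ :=
  (indepFun_arrival_of_measurable hA.measurable hA.indep
    (hQ.measurable_state_arrivalSigma t) (by simp)).comp
    (measurable_of_countable F) (measurable_of_countable fun n : ℕ => (n : ℝ))

lemma integrable_comp (hA : IsBernoulliArrivals μ lam A) (hQ : IsQueueProcess π A Q)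
    [IsFiniteMeasure μ] (F : (ι → ℕ) → ℝ) (t : ℕ) : Integrable (fun ω => F (Q t · ω)) μ := by
  obtain ⟨C, hC⟩ := hQ.exists_norm_le hA.le_one F t
  exact .of_bound
    ((measurable_of_countable F).comp (hQ.measurable_state hA.measurable t)).aestronglyMeasurable
    C (ae_of_all _ hC)

lemma integral_mul_arrival (hA : IsBernoulliArrivals μ lam A) (hQ : IsQueueProcess π A Q)
    (F : (ι → ℕ) → ℝ) (t : ℕ) (i : ι) :
    ∫ ω, F (Q t · ω) * A i t ω ∂μ = (∫ ω, F (Q t · ω) ∂μ) * lam i := by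
  rw [(hQ.indepFun_arrival hA F t i).integral_fun_mul_eq_mul_integral
    ((measurable_of_countable F).comp (hQ.measurable_state hA.measurable t)).aestronglyMeasurable
    ((measurable_of_countable _).comp (hA.measurable i t)).aestronglyMeasurable, hA.integral_eq]

lemma integrable_mul_sum_arrivals (hA : IsBernoulliArrivals μ lam A)
    (hQ : IsQueueProcess π A Q) [IsFiniteMeasure μ] (F : (ι → ℕ) → ℝ) (t : ℕ) (G : Finset ι) :
    Integrable (fun ω => F (Q t · ω) * ∑ i ∈ G, (A i t ω : ℝ)) μ := by
  obtain ⟨C, hC⟩ := hQ.exists_norm_le hA.le_one F t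
  exact (integrable_finsetSum G fun i _ => hA.integrable i t).bdd_mul
    ((measurable_of_countable F).comp (hQ.measurable_state hA.measurable t)).aestronglyMeasurable
    (ae_of_all _ hC)

lemma integral_mul_sum_arrivals (hA : IsBernoulliArrivals μ lam A) (hQ : IsQueueProcess π A Q)
    [IsFiniteMeasure μ] (F : (ι → ℕ) → ℝ) (t : ℕ) (G : Finset ι) :
    ∫ ω, F (Q t · ω) * ∑ i ∈ G, (A i t ω : ℝ) ∂μ =
      (∑ i ∈ G, lam i) * ∫ ω, F (Q t · ω) ∂μ := by
  simp_rw [Finset.mul_sum]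
  rw [integral_finsetSum _ fun i _ => by simpa using hQ.integrable_mul_sum_arrivals hA F t {i},
    Finset.sum_mul]
  simp_rw [hQ.integral_mul_arrival hA, mul_comm]

lemma sum_lintegral_eq_ofReal_integral_load [Fintype ι] (hA : IsBernoulliArrivals μ lam A)
    (hQ : IsQueueProcess π A Q) [IsFiniteMeasure μ] (t : ℕ) :
    ∑ i, ∫⁻ ω, (Q t i ω : ℝ≥0∞) ∂μ = ENNReal.ofReal (∫ ω, (load univ (Q t · ω) : ℝ) ∂μ) := by
  have hmeas (i : ι) : Measurable fun ω => (Q t i ω : ℝ≥0∞) :=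
    (measurable_of_countable _).comp
      ((measurable_pi_apply i).comp (hQ.measurable_state hA.measurable t))
  rw [← lintegral_finsetSum _ fun i _ => hmeas i,
    ofReal_integral_eq_lintegral_ofReal (hQ.integrable_comp hA (fun q => (load univ q : ℝ)) t)
      (ae_of_all _ fun ω => Nat.cast_nonneg _)]
  exact lintegral_congr fun ω => by rw [ENNReal.ofReal_natCast, load, Nat.cast_sum]

variable [IsProbabilityMeasure μ] {G : Finset ι} {e : (ι → ℕ) → ℕ}

theorem integral_load_sq_succ_le (hA : IsBernoulliArrivals μ lam A) (hQ : IsQueueProcess π A Q)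
    (hG : #G ≤ 2) (hserved : ∀ q, served π G q ≤ 1)
    (he : ∀ q, served π G q = 0 → load G q ≤ e q) (t : ℕ) :
    ∫ ω, ((load G (Q (t + 1) · ω) ^ 2 : ℕ) : ℝ) ∂μ ≤
      ∫ ω, ((load G (Q t · ω) ^ 2 : ℕ) : ℝ) ∂μ
        - 2 * (1 - ∑ i ∈ G, lam i) * ∫ ω, (load G (Q t · ω) : ℝ) ∂μ
        + (2 * ∫ ω, (e (Q t · ω) : ℝ) ∂μ + 4) := by
  simp only [Nat.cast_pow]
  have hpt (ω : Ω) : (load G (Q (t + 1) · ω) : ℝ) ^ 2 ≤ (load G (Q t · ω) : ℝ) ^ 2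
      + 2 * ((load G (Q t · ω) : ℝ) * ∑ i ∈ G, (A i t ω : ℝ)) - 2 * (load G (Q t · ω) : ℝ)
      + 2 * (e (Q t · ω) : ℝ) + 4 := by
    rw [hQ.load_succ]
    refine sq_sub_add_le (Nat.cast_nonneg _) (by exact_mod_cast hserved _) (by positivity)
      ((hA.sum_le_card G t ω).trans (by exact_mod_cast hG)) ?_
    exact_mod_cast le_add_mul_of_imp (he _)
  have hint_sq := hQ.integrable_comp hA (fun q => (load G q : ℝ) ^ 2) t
  have hint_mul := hQ.integrable_mul_sum_arrivals hA (fun q => (load G q : ℝ)) t G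
  have hint_load := hQ.integrable_comp hA (fun q => (load G q : ℝ)) t
  have hint_e := hQ.integrable_comp hA (fun q => (e q : ℝ)) t
  calc _ ≤ _ := integral_mono (hQ.integrable_comp hA (fun q => (load G q : ℝ) ^ 2) (t + 1))
        (by fun_prop) hpt
    _ = _ := by
      simp (disch := fun_prop) only [integral_add, integral_sub, integral_const_mul,
        integral_const]
      rw [hQ.integral_mul_sum_arrivals hA (fun q => (load G q : ℝ))]
      simp only [probReal_univ, smul_eq_mul, one_mul]
      ring

theorem integral_load_cube_succ_le (hA : IsBernoulliArrivals μ lam A)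
    (hQ : IsQueueProcess π A Q) (hG : #G ≤ 2) (hserved : ∀ q, served π G q ≤ 1)
    (he : ∀ q, served π G q = 0 → load G q ^ 2 ≤ e q) (t : ℕ) :
    ∫ ω, ((load G (Q (t + 1) · ω) ^ 3 : ℕ) : ℝ) ∂μ ≤
      ∫ ω, ((load G (Q t · ω) ^ 3 : ℕ) : ℝ) ∂μ
        - 3 * (1 - ∑ i ∈ G, lam i) * ∫ ω, ((load G (Q t · ω) ^ 2 : ℕ) : ℝ) ∂μ
        + (3 * ∫ ω, (e (Q t · ω) : ℝ) ∂μ + 12 * ∫ ω, (load G (Q t · ω) : ℝ) ∂μ + 8) := by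
  simp only [Nat.cast_pow]
  have hpt (ω : Ω) : (load G (Q (t + 1) · ω) : ℝ) ^ 3 ≤ (load G (Q t · ω) : ℝ) ^ 3
      + 3 * ((load G (Q t · ω) : ℝ) ^ 2 * ∑ i ∈ G, (A i t ω : ℝ))
      - 3 * (load G (Q t · ω) : ℝ) ^ 2 + 3 * (e (Q t · ω) : ℝ)
      + 12 * (load G (Q t · ω) : ℝ) + 8 := by
    rw [hQ.load_succ]
    refine cube_sub_add_le (Nat.cast_nonneg _) (Nat.cast_nonneg _)
      (by exact_mod_cast hserved _) (by positivity)
      ((hA.sum_le_card G t ω).trans (by exact_mod_cast hG)) ?_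
    exact_mod_cast le_add_mul_of_imp (he _)
  have hint_cube := hQ.integrable_comp hA (fun q => (load G q : ℝ) ^ 3) t
  have hint_mul := hQ.integrable_mul_sum_arrivals hA (fun q => (load G q : ℝ) ^ 2) t G
  have hint_sq := hQ.integrable_comp hA (fun q => (load G q : ℝ) ^ 2) t
  have hint_e := hQ.integrable_comp hA (fun q => (e q : ℝ)) t
  have hint_load := hQ.integrable_comp hA (fun q => (load G q : ℝ)) t
  calc _ ≤ _ := integral_mono (hQ.integrable_comp hA (fun q => (load G q : ℝ) ^ 3) (t + 1))
        (by fun_prop) hpt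
    _ = _ := by
      simp (disch := fun_prop) only [integral_add, integral_sub, integral_const_mul,
        integral_const]
      rw [hQ.integral_mul_sum_arrivals hA (fun q => (load G q : ℝ) ^ 2)]
      simp only [probReal_univ, smul_eq_mul, one_mul]
      ring

theorem hasBoundedAverages_integral_load (hA : IsBernoulliArrivals μ lam A)
    (hQ : IsQueueProcess π A Q) (hG : #G ≤ 2) (hserved : ∀ q, served π G q ≤ 1)
    (hcap : ∑ i ∈ G, lam i < 1) (he : ∀ q, served π G q = 0 → load G q ≤ e q)
    (hE : HasBoundedAverages fun t => ∫ ω, (e (Q t · ω) : ℝ) ∂μ) :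
    HasBoundedAverages fun t => ∫ ω, (load G (Q t · ω) : ℝ) ∂μ :=
  .of_drift (V := fun t => ∫ ω, ((load G (Q t · ω) ^ 2 : ℕ) : ℝ) ∂μ)
    (hdrift := hQ.integral_load_sq_succ_le hA hG hserved he)
    (hb := (hE.const_mul zero_le_two).add (.const 4)) (by linarith)
    (by simp [hQ.zero, load]) fun t => integral_nonneg fun ω => Nat.cast_nonneg _

theorem hasBoundedAverages_integral_load_sq (hA : IsBernoulliArrivals μ lam A)
    (hQ : IsQueueProcess π A Q) (hG : #G ≤ 2) (hserved : ∀ q, served π G q ≤ 1)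
    (hcap : ∑ i ∈ G, lam i < 1) (he : ∀ q, served π G q = 0 → load G q ^ 2 ≤ e q)
    (hE : HasBoundedAverages fun t => ∫ ω, (e (Q t · ω) : ℝ) ∂μ)
    (hL : HasBoundedAverages fun t => ∫ ω, (load G (Q t · ω) : ℝ) ∂μ) :
    HasBoundedAverages fun t => ∫ ω, ((load G (Q t · ω) ^ 2 : ℕ) : ℝ) ∂μ :=
  .of_drift (V := fun t => ∫ ω, ((load G (Q t · ω) ^ 3 : ℕ) : ℝ) ∂μ)
    (hdrift := hQ.integral_load_cube_succ_le hA hG hserved he)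
    (hb := ((hE.const_mul zero_le_three).add (hL.const_mul (by norm_num))).add (.const 8))
    (by linarith) (by simp [hQ.zero, load])
    fun t => integral_nonneg fun ω => Nat.cast_nonneg _

end IsQueueProcess

lemma served_piTD4_le_one (q : Fin 4 → ℕ) (i : Fin 3) :
    served piTD4 {i.castSucc, i.succ} q ≤ 1 := by
  fin_cases i <;> simp only [served, piTD4] <;> split_ifs <;> simp

lemma load_eq_zero_of_served_piTD4_eq_zero {q : Fin 4 → ℕ}
    (h : served piTD4 {0, 1} q = 0) :
    load {0, 1} q = 0 := by
  simp only [served, load, piTD4] at h ⊢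
  split_ifs at h <;> simp_all

lemma load_le_of_served_piTD4_eq_zero {q : Fin 4 → ℕ} (h : served piTD4 {1, 2} q = 0) :
    load {1, 2} q ≤ load {0, 1} q := by
  simp only [served, load, piTD4] at h ⊢
  split_ifs at h <;> simp_all

lemma load_le_sq_of_served_piTD4_eq_zero {q : Fin 4 → ℕ}
    (h : served piTD4 {2, 3} q = 0) :
    load {2, 3} q ≤ load {1, 2} q ^ 2 := by
  simp only [served, load, piTD4] at h ⊢
  split_ifs at h <;> simp_all
  nlinarith

end Queueing

open Queueing

theorem piTD4_throughput_optimal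
    {Ω : Type*} [MeasurableSpace Ω] (μ : Measure Ω) [IsProbabilityMeasure μ]
    (lam : Fin 4 → ℝ) (hlam : ∀ i, 0 ≤ lam i ∧ lam i ≤ 1)
    (hcap1 : lam 0 + lam 1 < 1) (hcap2 : lam 1 + lam 2 < 1) (hcap3 : lam 2 + lam 3 < 1)
    (A : Fin 4 → ℕ → Ω → ℕ)
    (hAmeas : ∀ i t, Measurable (A i t))
    (hA01 : ∀ i t ω, A i t ω ≤ 1)
    (hArate : ∀ i t, μ {ω | A i t ω = 1} = ENNReal.ofReal (lam i))
    (hAindep : iIndepFun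
      (fun p : Fin 4 × ℕ => fun ω => A p.1 p.2 ω) μ)
    (Q : ℕ → Fin 4 → Ω → ℕ)
    (hQ0 : ∀ i ω, Q 0 i ω = 0)
    (hQevol : ∀ t i ω,
      Q (t + 1) i ω = Q t i ω - piTD4 (fun j => Q t j ω) i + A i t ω) :
    limsup (fun T : ℕ =>
        (∑ t ∈ Finset.range T, ∑ i, ∫⁻ ω, (Q t i ω : ℝ≥0∞) ∂μ) / (T : ℝ≥0∞))
      atTop < ⊤ := by
  have hA : IsBernoulliArrivals μ lam A := ⟨fun i => (hlam i).1, hAmeas, hA01, hArate, hAindep⟩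
  have hQ : IsQueueProcess piTD4 A Q := ⟨hQ0, hQevol⟩
  have h01 := hQ.hasBoundedAverages_integral_load hA (G := {0, 1}) card_le_two
    (served_piTD4_le_one · 0) (by simpa using hcap1) (e := 0)
    (fun q h => (load_eq_zero_of_served_piTD4_eq_zero h).le)
    (by simpa using HasBoundedAverages.const 0)
  have h01sq := hQ.hasBoundedAverages_integral_load_sq hA (G := {0, 1}) card_le_two
    (served_piTD4_le_one · 0) (by simpa using hcap1) (e := 0)
    (fun q h => by simp [load_eq_zero_of_served_piTD4_eq_zero h])
    (by simpa using HasBoundedAverages.const 0) h01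
  have h12 := hQ.hasBoundedAverages_integral_load hA (G := {1, 2}) card_le_two
    (served_piTD4_le_one · 1) (by simpa using hcap2)
    (fun q h => load_le_of_served_piTD4_eq_zero h) h01
  have h12sq := hQ.hasBoundedAverages_integral_load_sq hA (G := {1, 2}) card_le_two
    (served_piTD4_le_one · 1) (by simpa using hcap2) (e := fun q => load {0, 1} q ^ 2)
    (fun q h => Nat.pow_le_pow_left (load_le_of_served_piTD4_eq_zero h) 2) h01sq h12
  have h23 := hQ.hasBoundedAverages_integral_load hA (G := {2, 3}) card_le_two
    (served_piTD4_le_one · 2) (by simpa using hcap3) (e := fun q => load {1, 2} q ^ 2)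
    (fun q h => load_le_sq_of_served_piTD4_eq_zero h) h12sq
  have htotal : HasBoundedAverages fun t => ∫ ω, (load univ (Q t · ω) : ℝ) ∂μ := by
    convert h01.add h23 using 2 with t
    rw [Pi.add_apply,
      ← integral_add (hQ.integrable_comp hA (fun q => (load {0, 1} q : ℝ)) t)
        (hQ.integrable_comp hA (fun q => (load {2, 3} q : ℝ)) t)]
    congr with ω
    simp [load, Fin.sum_univ_four, add_assoc]
  simpa [hQ.sum_lintegral_eq_ofReal_integral_load hA] using
    htotal.limsup_lt_top fun t => integral_nonneg fun ω => Nat.cast_nonneg _
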